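/- For 1 < α < 2, the series ∑_{m=0}^∞ g_m^α converges to 0, where g_m^α = (-1)^m C(α, m). -/

import Mathlib

/-- The Grünwald weight `g_m^α = (-1)^m * C(α, m)`. -/
noncomputable def grunwaldG (α : ℝ) (m : ℕ) : ℝ :=
  (-1) ^ m * (∏ i ∈ Finset.range m, (α - i)) / m.factorial

/-!
Pascal's rule `g_{m+1}^α = g_{m+1}^{α-1} - g_m^{α-1}` makes the partial sums telescope:
`∑_{m ≤ n} g_m^α = g_n^{α-1}`. For `β = α - 1 ∈ [0, 1]` the ratio `(m - β)/(m + 1)` of consecutive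
weights gives `|g_{n+1}^β| ≤ β/(n+1)`, so the partial sums tend to `0`. Convergence of the partial
sums alone does not give `HasSum` (unconditional summation); it follows here because
`g_m^α ≥ 0` for `m ≥ 2` when `1 ≤ α ≤ 2`.
-/

open Filter Finset Topology

lemma hasSum_of_tendsto_sum_range_of_nonneg_add {f : ℕ → ℝ} {a : ℝ} (k : ℕ)
    (hf : ∀ m, 0 ≤ f (m + k)) (h : Tendsto (fun n ↦ ∑ i ∈ range n, f i) atTop (𝓝 a)) :
    HasSum f a := by
  rw [← hasSum_nat_add_iff' k, hasSum_iff_tendsto_nat_of_nonneg hf]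
  have h_shift := ((tendsto_add_atTop_iff_nat k).mpr h).sub_const (∑ i ∈ range k, f i)
  simpa only [add_comm _ k, sum_range_add, add_sub_cancel_left] using h_shift

section grunwaldG

variable (α : ℝ)

@[simp] lemma grunwaldG_zero : grunwaldG α 0 = 1 := by simp [grunwaldG]

lemma grunwaldG_succ (m : ℕ) : grunwaldG α (m + 1) = grunwaldG α m * ((m - α) / (m + 1)) := by
  simp only [grunwaldG, prod_range_succ, pow_succ, Nat.factorial_succ]
  push_cast
  field_simp
  ring

@[simp] lemma grunwaldG_one : grunwaldG α 1 = -α := by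
  simp [grunwaldG_succ]

lemma grunwaldG_succ_eq_sub (m : ℕ) :
    grunwaldG α (m + 1) = grunwaldG (α - 1) (m + 1) - grunwaldG (α - 1) m := by
  have h_shift : ∏ i ∈ range (m + 1), (α - i) = α * ∏ i ∈ range m, (α - 1 - i) := by
    rw [prod_range_succ', mul_comm]
    congr 1
    · simp
    · exact prod_congr rfl fun i _ ↦ by push_cast; ring
  rw [grunwaldG_succ (α - 1), grunwaldG, h_shift, grunwaldG, Nat.factorial_succ]
  push_cast
  field_simp
  ring

lemma sum_range_succ_grunwaldG (n : ℕ) :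
    ∑ m ∈ range (n + 1), grunwaldG α m = grunwaldG (α - 1) n := by
  induction n with
  | zero => simp
  | succ n ih => rw [sum_range_succ, ih, grunwaldG_succ_eq_sub]; ring

variable {α}

lemma grunwaldG_nonneg (h1 : 1 ≤ α) (h2 : α ≤ 2) {m : ℕ} (hm : 2 ≤ m) : 0 ≤ grunwaldG α m := by
  induction m, hm using Nat.le_induction with
  | base =>
    rw [grunwaldG_succ, grunwaldG_one]
    push_cast
    nlinarith
  | succ m hm ih =>
    rw [grunwaldG_succ]
    have : (2 : ℝ) ≤ m := by exact_mod_cast hm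
    exact mul_nonneg ih (div_nonneg (by linarith) (by positivity))

lemma abs_grunwaldG_succ_le (h0 : 0 ≤ α) (h1 : α ≤ 1) (n : ℕ) :
    |grunwaldG α (n + 1)| ≤ α / (n + 1) := by
  induction n with
  | zero => simp [abs_of_nonneg h0]
  | succ n ih =>
    have hn : (0 : ℝ) ≤ n := n.cast_nonneg
    have h_ratio : 0 ≤ ((n + 1 : ℕ) - α) / ((n + 1 : ℕ) + 1) := by
      push_cast
      exact div_nonneg (by linarith) (by positivity)
    calc |grunwaldG α (n + 1 + 1)|
        = |grunwaldG α (n + 1)| * ((n + 1 - α) / (n + 2)) := by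
          rw [grunwaldG_succ, abs_mul, abs_of_nonneg h_ratio]
          push_cast
          ring
      _ ≤ α / (n + 1) * ((n + 1) / (n + 2)) := by
          gcongr
          · exact div_nonneg (by linarith) (by positivity)
          · linarith
      _ = α / ((n + 1 : ℕ) + 1) := by push_cast; field_simp; ring

lemma tendsto_grunwaldG_atTop (h0 : 0 ≤ α) (h1 : α ≤ 1) :
    Tendsto (grunwaldG α) atTop (𝓝 0) := by
  rw [← tendsto_add_atTop_iff_nat 1]
  refine squeeze_zero_norm (fun n ↦ abs_grunwaldG_succ_le h0 h1 n) ?_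
  exact tendsto_const_nhds.div_atTop
    (tendsto_atTop_add_const_right _ _ tendsto_natCast_atTop_atTop)

end grunwaldG

theorem grunwaldG_hasSum_zero (α : ℝ) (hα : 1 < α) (hα2 : α < 2) :
    HasSum (fun m : ℕ => grunwaldG α m) 0 := by
  refine hasSum_of_tendsto_sum_range_of_nonneg_add 2
    (fun m ↦ grunwaldG_nonneg hα.le hα2.le (Nat.le_add_left 2 m)) ?_
  rw [← tendsto_add_atTop_iff_nat 1]
  simpa only [sum_range_succ_grunwaldG] using
    tendsto_grunwaldG_atTop (by linarith : 0 ≤ α - 1) (by linarith)
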